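/- Let ξ ∈ ℝ^d be nonzero, B a symmetric d×d matrix, ψ(v) = ⟨ξ,v⟩ + vᵀBv, and ζ = 4‖B‖/|ξ|. Suppose 0 < ε < min(1, ζ⁻¹) and v maximizes ψ over the closed ball B̄(0,ε). Then |ψ(v) − ε|ξ| − D| ≤ 16‖B‖²ε³/|ξ|, where D = wᵀBw with w = ε|ξ|⁻¹ξ (i.e., D = ε²ξᵀBξ/|ξ|² is half the second derivative of ψ in the direction ξ times ε²). -/

import Mathlib

/-!
Write `ψ u = ⟪ξ, u⟫ + ⟪u, T u⟫` with `T` the operator of `B`, and let `w = (ε / ‖ξ‖) • ξ` be the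
maximizer of the linear part on `B̄(0, ε)`. Maximality of `v` gives `ψ w ≤ ψ v`, so the loss
`ε ‖ξ‖ - ⟪ξ, v⟫` of the linear part is at most the gain `⟪v, T v⟫ - ⟪w, T w⟫ ≤ 2 ‖T‖ ε ‖v - w‖`
of the quadratic part. On the other hand the loss controls `‖v - w‖² ≤ (2ε / ‖ξ‖) · loss`, whence
`‖v - w‖ ≤ 4 ‖T‖ ε² / ‖ξ‖` and `0 ≤ ψ v - ψ w ≤ 2 ‖T‖ ε ‖v - w‖ ≤ 8 ‖T‖² ε³ / ‖ξ‖`.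
-/

open scoped RealInnerProductSpace

lemma Matrix.inner_toEuclideanCLM_eq_sum {n : Type*} [Fintype n] [DecidableEq n]
    (B : Matrix n n ℝ) (x y : EuclideanSpace ℝ n) :
    ⟪x, Matrix.toEuclideanCLM (𝕜 := ℝ) B y⟫ = ∑ i, ∑ j, x i * B i j * y j := by
  simp [Matrix.inner_toEuclideanCLM, dotProduct, Matrix.mulVec, Finset.mul_sum, mul_assoc]

section QuadraticPerturbation

variable {E : Type*} [NormedAddCommGroup E] [InnerProductSpace ℝ E]

lemma abs_inner_map_self_sub_le (T : E →L[ℝ] E) (v w : E) :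
    |⟪v, T v⟫ - ⟪w, T w⟫| ≤ ‖T‖ * (‖v‖ + ‖w‖) * ‖v - w‖ := by
  have bound : ∀ x y : E, |⟪x, T y⟫| ≤ ‖T‖ * ‖x‖ * ‖y‖ := fun x y =>
    calc |⟪x, T y⟫| ≤ ‖x‖ * ‖T y‖ := abs_real_inner_le_norm x (T y)
      _ ≤ ‖x‖ * (‖T‖ * ‖y‖) := by gcongr; exact T.le_opNorm y
      _ = ‖T‖ * ‖x‖ * ‖y‖ := by ring
  have split : ⟪v, T v⟫ - ⟪w, T w⟫ = ⟪v - w, T v⟫ + ⟪w, T (v - w)⟫ := by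
    rw [inner_sub_left, map_sub, inner_sub_right]; ring
  calc |⟪v, T v⟫ - ⟪w, T w⟫| ≤ |⟪v - w, T v⟫| + |⟪w, T (v - w)⟫| := split ▸ abs_add_le _ _
    _ ≤ ‖T‖ * ‖v - w‖ * ‖v‖ + ‖T‖ * ‖w‖ * ‖v - w‖ := add_le_add (bound _ _) (bound _ _)
    _ = ‖T‖ * (‖v‖ + ‖w‖) * ‖v - w‖ := by ring

variable {ξ : E}

lemma norm_div_norm_smul_self (hξ : ξ ≠ 0) (r : ℝ) : ‖(r / ‖ξ‖) • ξ‖ = |r| := by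
  rw [norm_smul, norm_div, norm_norm, Real.norm_eq_abs,
    div_mul_cancel₀ _ (norm_ne_zero_iff.mpr hξ)]

lemma inner_div_norm_smul_self (hξ : ξ ≠ 0) (r : ℝ) : ⟪ξ, (r / ‖ξ‖) • ξ⟫ = r * ‖ξ‖ := by
  have : ‖ξ‖ ≠ 0 := norm_ne_zero_iff.mpr hξ
  rw [real_inner_smul_right, real_inner_self_eq_norm_sq]
  field_simp

variable {r : ℝ}

lemma norm_sub_div_norm_smul_sq_le (hξ : ξ ≠ 0) {v : E} (hv : ‖v‖ ≤ r) :
    ‖v - (r / ‖ξ‖) • ξ‖ ^ 2 ≤ 2 * r / ‖ξ‖ * (r * ‖ξ‖ - ⟪ξ, v⟫) := by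
  have hξ' : ‖ξ‖ ≠ 0 := norm_ne_zero_iff.mpr hξ
  have hr : 0 ≤ r := (norm_nonneg v).trans hv
  rw [norm_sub_sq_real, norm_div_norm_smul_self hξ, abs_of_nonneg hr, real_inner_smul_right,
    real_inner_comm]
  have : ‖v‖ ^ 2 ≤ r ^ 2 := pow_le_pow_left₀ (norm_nonneg v) hv 2
  have expand : 2 * r / ‖ξ‖ * (r * ‖ξ‖ - ⟪ξ, v⟫) = 2 * r ^ 2 - 2 * (r / ‖ξ‖ * ⟪ξ, v⟫) := by
    field_simp
  rw [expand]
  linarith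

lemma norm_sub_div_norm_smul_le (hξ : ξ ≠ 0) {v : E} (hv : ‖v‖ ≤ r) {c : ℝ} (hc : 0 ≤ c)
    (hloss : r * ‖ξ‖ - ⟪ξ, v⟫ ≤ c * ‖v - (r / ‖ξ‖) • ξ‖) :
    ‖v - (r / ‖ξ‖) • ξ‖ ≤ 2 * r * c / ‖ξ‖ := by
  set δ := ‖v - (r / ‖ξ‖) • ξ‖
  have hr : 0 ≤ r := (norm_nonneg v).trans hv
  have ha : 0 ≤ 2 * r * c / ‖ξ‖ := by positivity
  have hsq : δ ^ 2 ≤ 2 * r * c / ‖ξ‖ * δ :=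
    calc δ ^ 2 ≤ 2 * r / ‖ξ‖ * (r * ‖ξ‖ - ⟪ξ, v⟫) := norm_sub_div_norm_smul_sq_le hξ hv
      _ ≤ 2 * r / ‖ξ‖ * (c * δ) := by gcongr
      _ = 2 * r * c / ‖ξ‖ * δ := by ring
  nlinarith [norm_nonneg (v - (r / ‖ξ‖) • ξ)]

theorem abs_sub_le_of_isMaxOn_closedBall (T : E →L[ℝ] E) (hξ : ξ ≠ 0) {v : E}
    (hv : v ∈ Metric.closedBall 0 r)
    (hmax : IsMaxOn (fun u => ⟪ξ, u⟫ + ⟪u, T u⟫) (Metric.closedBall 0 r) v) :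
    |⟪ξ, v⟫ + ⟪v, T v⟫ - r * ‖ξ‖ - ⟪(r / ‖ξ‖) • ξ, T ((r / ‖ξ‖) • ξ)⟫| ≤
      8 * ‖T‖ ^ 2 * r ^ 3 / ‖ξ‖ := by
  set w := (r / ‖ξ‖) • ξ
  rw [mem_closedBall_zero_iff] at hv
  have hr : 0 ≤ r := (norm_nonneg v).trans hv
  have hw : ‖w‖ = r := by rw [norm_div_norm_smul_self hξ, abs_of_nonneg hr]
  have hgain : r * ‖ξ‖ + ⟪w, T w⟫ ≤ ⟪ξ, v⟫ + ⟪v, T v⟫ := by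
    rw [← inner_div_norm_smul_self hξ r]
    exact hmax (mem_closedBall_zero_iff.mpr hw.le)
  have hlin : ⟪ξ, v⟫ ≤ r * ‖ξ‖ :=
    (real_inner_le_norm ξ v).trans (by rw [mul_comm]; gcongr)
  have hquad : ⟪v, T v⟫ - ⟪w, T w⟫ ≤ 2 * ‖T‖ * r * ‖v - w‖ :=
    calc ⟪v, T v⟫ - ⟪w, T w⟫ ≤ ‖T‖ * (‖v‖ + ‖w‖) * ‖v - w‖ :=
          (le_abs_self _).trans (abs_inner_map_self_sub_le T v w)
      _ ≤ ‖T‖ * (r + r) * ‖v - w‖ := by gcongr; exact hw.le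
      _ = 2 * ‖T‖ * r * ‖v - w‖ := by ring
  have hdist : ‖v - w‖ ≤ 2 * r * (2 * ‖T‖ * r) / ‖ξ‖ :=
    norm_sub_div_norm_smul_le hξ hv (by positivity) (by linarith)
  rw [abs_of_nonneg (by linarith)]
  calc ⟪ξ, v⟫ + ⟪v, T v⟫ - r * ‖ξ‖ - ⟪w, T w⟫ ≤ 2 * ‖T‖ * r * ‖v - w‖ := by linarith
    _ ≤ 2 * ‖T‖ * r * (2 * r * (2 * ‖T‖ * r) / ‖ξ‖) := by gcongr
    _ = 8 * ‖T‖ ^ 2 * r ^ 3 / ‖ξ‖ := by ring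

end QuadraticPerturbation

theorem stmt1_general {d : ℕ} (B : Matrix (Fin d) (Fin d) ℝ)
    (ξ : EuclideanSpace ℝ (Fin d)) (hξ : ξ ≠ 0)
    (ψ : EuclideanSpace ℝ (Fin d) → ℝ)
    (hψ : ∀ v, ψ v = ⟪ξ, v⟫ + ∑ i, ∑ j, v i * B i j * v j)
    (ε : ℝ)
    (v : EuclideanSpace ℝ (Fin d)) (hv : v ∈ Metric.closedBall 0 ε)
    (hmax : IsMaxOn ψ (Metric.closedBall 0 ε) v)
    (w : EuclideanSpace ℝ (Fin d)) (hw : w = (ε / ‖ξ‖) • ξ)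
    (D : ℝ) (hD : D = ∑ i, ∑ j, w i * B i j * w j) :
    |ψ v - ε * ‖ξ‖ - D| ≤ 16 * ‖Matrix.toEuclideanCLM (𝕜 := ℝ) B‖ ^ 2 * ε ^ 3 / ‖ξ‖ := by
  set T := Matrix.toEuclideanCLM (𝕜 := ℝ) B
  have hψT : ψ = fun u => ⟪ξ, u⟫ + ⟪u, T u⟫ := by
    funext u; rw [hψ, Matrix.inner_toEuclideanCLM_eq_sum]
  subst hψT hw hD
  rw [← Matrix.inner_toEuclideanCLM_eq_sum]
  calc _ ≤ 8 * ‖T‖ ^ 2 * ε ^ 3 / ‖ξ‖ := abs_sub_le_of_isMaxOn_closedBall T hξ hv hmax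
    _ ≤ 16 * ‖T‖ ^ 2 * ε ^ 3 / ‖ξ‖ := by
      have : 0 ≤ ε := (norm_nonneg v).trans (mem_closedBall_zero_iff.mp hv)
      gcongr; norm_num

/-- value of `ψ` at its maximizer over `B̄(0,ε)`:
`|ψ(v) − ε|ξ| − wᵀBw| ≤ 16‖B‖²ε³/|ξ|` where `w = ε|ξ|⁻¹ξ`. -/
theorem stmt1 {d : ℕ} (B : Matrix (Fin d) (Fin d) ℝ) (hB : B.IsSymm)
    (ξ : EuclideanSpace ℝ (Fin d)) (hξ : ξ ≠ 0)
    (ψ : EuclideanSpace ℝ (Fin d) → ℝ)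
    (hψ : ∀ v, ψ v = ⟪ξ, v⟫ + ∑ i, ∑ j, v i * B i j * v j)
    (ζ : ℝ) (hζ : ζ = 4 * ‖Matrix.toEuclideanCLM (𝕜 := ℝ) B‖ / ‖ξ‖)
    (ε : ℝ) (hε : 0 < ε) (hε1 : ε < 1) (hεζ : ε < ζ⁻¹)
    (v : EuclideanSpace ℝ (Fin d)) (hv : v ∈ Metric.closedBall 0 ε)
    (hmax : IsMaxOn ψ (Metric.closedBall 0 ε) v)
    (w : EuclideanSpace ℝ (Fin d)) (hw : w = (ε / ‖ξ‖) • ξ)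
    (D : ℝ) (hD : D = ∑ i, ∑ j, w i * B i j * w j) :
    |ψ v - ε * ‖ξ‖ - D| ≤ 16 * ‖Matrix.toEuclideanCLM (𝕜 := ℝ) B‖ ^ 2 * ε ^ 3 / ‖ξ‖ :=
  stmt1_general B ξ hξ ψ hψ ε v hv hmax w hw D hD
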